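/- Let F be an anti-invariant Riemannian submersion from a Sasakian manifold with φ(ker F_*) = (ker F_*)^⊥. Then the horizontal distribution (ker F_*)^⊥ is integrable if and only if A_X φY = A_Y φX for all horizontal vector fields X, Y, where A is the O'Neill tensor. -/

import Mathlib

/-- Algebraic model of a Riemannian submersion `F : (M,g_M) → (N,g_N)`:
`Fn` plays the role of smooth functions on `M`, `VF` of vector fields on `M`,
`g` is the metric, `der` the directional derivative, `nabla` the Levi-Civita
connection, `bracket` the Lie bracket, and `vert`/`horiz` the projections onto
the vertical distribution `ker F_*` and the horizontal distribution
`(ker F_*)^⊥` determined by the fibers of the submersion. -/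
structure RiemannianSubmersionData (Fn VF : Type) [CommRing Fn] [Algebra ℝ Fn]
    [AddCommGroup VF] [Module Fn VF] where
  g : VF → VF → Fn
  g_symm : ∀ X Y, g X Y = g Y X
  g_add_left : ∀ X Y Z, g (X + Y) Z = g X Z + g Y Z
  g_smul_left : ∀ (f : Fn) (X Y : VF), g (f • X) Y = f * g X Y
  g_nondeg : ∀ X, (∀ Y, g X Y = 0) → X = 0
  der : VF → Fn → Fn
  der_add : ∀ X f₁ f₂, der X (f₁ + f₂) = der X f₁ + der X f₂
  der_mul : ∀ X f₁ f₂, der X (f₁ * f₂) = f₁ * der X f₂ + f₂ * der X f₁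
  bracket : VF → VF → VF
  nabla : VF → VF → VF
  nabla_add_left : ∀ X Y Z, nabla (X + Y) Z = nabla X Z + nabla Y Z
  nabla_add_right : ∀ X Y Z, nabla X (Y + Z) = nabla X Y + nabla X Z
  nabla_smul_left : ∀ (f : Fn) (X Y : VF), nabla (f • X) Y = f • nabla X Y
  nabla_smul_right : ∀ (f : Fn) (X Y : VF),
    nabla X (f • Y) = f • nabla X Y + der X f • Y
  torsion_free : ∀ X Y, nabla X Y - nabla Y X = bracket X Y
  compat : ∀ X Y Z, der X (g Y Z) = g (nabla X Y) Z + g Y (nabla X Z)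
  vert : VF → VF
  horiz : VF → VF
  vert_add : ∀ X Y, vert (X + Y) = vert X + vert Y
  vert_smul : ∀ (f : Fn) (X : VF), vert (f • X) = f • vert X
  horiz_add : ∀ X Y, horiz (X + Y) = horiz X + horiz Y
  horiz_smul : ∀ (f : Fn) (X : VF), horiz (f • X) = f • horiz X
  vert_add_horiz : ∀ X, vert X + horiz X = X
  vert_vert : ∀ X, vert (vert X) = vert X
  vert_horiz : ∀ X, vert (horiz X) = 0
  horiz_vert : ∀ X, horiz (vert X) = 0
  g_vert_horiz : ∀ X Y, g (vert X) (horiz Y) = 0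
  vert_bracket : ∀ X Y, vert X = X → vert Y = Y → vert (bracket X Y) = bracket X Y

namespace RiemannianSubmersionData

variable {Fn VF : Type} [CommRing Fn] [Algebra ℝ Fn] [AddCommGroup VF] [Module Fn VF]

/-- O'Neill tensor `T_E F = H∇_{VE}(VF) + V∇_{VE}(HF)`. -/
def T (S : RiemannianSubmersionData Fn VF) (E F : VF) : VF :=
  S.horiz (S.nabla (S.vert E) (S.vert F)) + S.vert (S.nabla (S.vert E) (S.horiz F))

/-- O'Neill tensor `A_E F = V∇_{HE}(HF) + H∇_{HE}(VF)`. -/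
def A (S : RiemannianSubmersionData Fn VF) (E F : VF) : VF :=
  S.vert (S.nabla (S.horiz E) (S.horiz F)) + S.horiz (S.nabla (S.horiz E) (S.vert F))

end RiemannianSubmersionData

/-- A Riemannian submersion from a Sasakian manifold `M(φ,ξ,η,g)` onto a
Riemannian manifold: the total space carries an almost contact metric structure
`(phi, xi, eta, g)` satisfying the Sasakian condition
`(∇_X φ)Y = g(X,Y)ξ - η(Y)X` (and hence `R(ξ,X)Y = g(X,Y)ξ - η(Y)X`). -/
structure SasakianSubmersionData (Fn VF : Type) [CommRing Fn] [Algebra ℝ Fn]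
    [AddCommGroup VF] [Module Fn VF] extends RiemannianSubmersionData Fn VF where
  phi : VF → VF
  xi : VF
  eta : VF → Fn
  phi_add : ∀ X Y, phi (X + Y) = phi X + phi Y
  phi_smul : ∀ (f : Fn) (X : VF), phi (f • X) = f • phi X
  eta_add : ∀ X Y, eta (X + Y) = eta X + eta Y
  eta_smul : ∀ (f : Fn) (X : VF), eta (f • X) = f * eta X
  phi_phi : ∀ X, phi (phi X) = -X + eta X • xi
  phi_xi : phi xi = 0
  eta_phi : ∀ X, eta (phi X) = 0
  eta_xi : eta xi = 1
  g_phi : ∀ X Y, g (phi X) (phi Y) = g X Y - eta X * eta Y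
  eta_g : ∀ X, eta X = g X xi
  sasaki : ∀ X Y, nabla X (phi Y) - phi (nabla X Y) = g X Y • xi - eta Y • X
  curv_xi : ∀ X Y, nabla xi (nabla X Y) - nabla X (nabla xi Y)
      - nabla (bracket xi X) Y = g X Y • xi - eta Y • X

namespace SasakianSubmersionData

variable {Fn VF : Type} [CommRing Fn] [Algebra ℝ Fn] [AddCommGroup VF] [Module Fn VF]

/-- Vertical part `BX` of `φX` for horizontal `X`. -/
def B (S : SasakianSubmersionData Fn VF) (X : VF) : VF := S.vert (S.phi X)

/-- Horizontal (`μ`-)part `CX` of `φX` for horizontal `X`. -/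
def C (S : SasakianSubmersionData Fn VF) (X : VF) : VF := S.horiz (S.phi X)

/-- O'Neill tensor `T`. -/
def T (S : SasakianSubmersionData Fn VF) : VF → VF → VF :=
  S.toRiemannianSubmersionData.T

/-- O'Neill tensor `A`. -/
def A (S : SasakianSubmersionData Fn VF) : VF → VF → VF :=
  S.toRiemannianSubmersionData.A

/-- `F` is anti-invariant: `φ(ker F_*) ⊆ (ker F_*)^⊥`. -/
def AntiInvariant (S : SasakianSubmersionData Fn VF) : Prop :=
  ∀ U, S.vert U = U → S.horiz (S.phi U) = S.phi U

end SasakianSubmersionData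

/-!
For horizontal `X, Y` the field `φY` is vertical, so the Sasakian identity
`(∇_X φ)Y = g(X,Y)ξ - η(Y)X` gives `A_X φY = H(φ ∇_X Y)`; by torsion-freeness and
anti-invariance `A_X φY - A_Y φX = H(φ[X,Y]) = φ(V[X,Y])`. The kernel of `φ` is spanned
by `ξ`, and `η([X,Y]) = 0` because `φ(∇_X ξ) = X` forces `g(Y, ∇_X ξ) = g(φY, X) = 0`.
So `φ(V[X,Y]) = 0` exactly when `V[X,Y] = 0`.
-/

namespace RiemannianSubmersionData

variable {Fn VF : Type} [CommRing Fn] [Algebra ℝ Fn] [AddCommGroup VF] [Module Fn VF]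
  (S : RiemannianSubmersionData Fn VF)

theorem vert_zero : S.vert 0 = 0 := (AddMonoidHom.mk' S.vert S.vert_add).map_zero

theorem vert_neg (X : VF) : S.vert (-X) = -S.vert X :=
  (AddMonoidHom.mk' S.vert S.vert_add).map_neg X

theorem horiz_sub (X Y : VF) : S.horiz (X - Y) = S.horiz X - S.horiz Y :=
  (AddMonoidHom.mk' S.horiz S.horiz_add).map_sub X Y

theorem nabla_zero_right (X : VF) : S.nabla X 0 = 0 :=
  (AddMonoidHom.mk' (S.nabla X) (S.nabla_add_right X)).map_zero

theorem der_zero (X : VF) : S.der X 0 = 0 :=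
  (AddMonoidHom.mk' (S.der X) (S.der_add X)).map_zero

theorem g_sub_left (X Y Z : VF) : S.g (X - Y) Z = S.g X Z - S.g Y Z :=
  (AddMonoidHom.mk' (S.g · Z) (S.g_add_left · · Z)).map_sub X Y

theorem horiz_horiz (X : VF) : S.horiz (S.horiz X) = S.horiz X := by
  simpa only [S.vert_horiz, zero_add] using S.vert_add_horiz (S.horiz X)

theorem horiz_eq_zero_of_vert {U : VF} (hU : S.vert U = U) : S.horiz U = 0 := by
  rw [← hU, S.horiz_vert]

theorem g_eq_zero_of_vert_of_horiz {U X : VF} (hU : S.vert U = U) (hX : S.horiz X = X) :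
    S.g U X = 0 := by
  rw [← hU, ← hX, S.g_vert_horiz]

end RiemannianSubmersionData

namespace SasakianSubmersionData

variable {Fn VF : Type} [CommRing Fn] [Algebra ℝ Fn] [AddCommGroup VF] [Module Fn VF]
  (S : SasakianSubmersionData Fn VF)

theorem phi_zero : S.phi 0 = 0 := (AddMonoidHom.mk' S.phi S.phi_add).map_zero

theorem phi_sub (X Y : VF) : S.phi (X - Y) = S.phi X - S.phi Y :=
  (AddMonoidHom.mk' S.phi S.phi_add).map_sub X Y

theorem eq_eta_smul_xi_of_phi_eq_zero {X : VF} (hX : S.phi X = 0) : X = S.eta X • S.xi := by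
  simpa only [hX, phi_zero, eq_neg_add_iff_add_eq, add_zero, eq_comm] using S.phi_phi X

theorem phi_nabla_xi (X : VF) : S.phi (S.nabla X S.xi) = X - S.eta X • S.xi := by
  have h := S.sasaki X S.xi
  rw [S.phi_xi, S.nabla_zero_right, S.eta_xi, one_smul, ← S.eta_g, zero_sub] at h
  rw [← neg_sub, ← h, neg_neg]

theorem eta_horiz (hxi : S.vert S.xi = S.xi) (X : VF) : S.eta (S.horiz X) = 0 := by
  rw [S.eta_g, S.g_symm, ← hxi, S.g_vert_horiz]

theorem eta_eq_zero_of_horiz (hxi : S.vert S.xi = S.xi) {X : VF} (hX : S.horiz X = X) :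
    S.eta X = 0 := by
  rw [← hX, S.eta_horiz hxi]

theorem eta_vert (hxi : S.vert S.xi = S.xi) (X : VF) : S.eta (S.vert X) = S.eta X := by
  conv_rhs => rw [← S.vert_add_horiz X, S.eta_add, S.eta_horiz hxi, add_zero]

theorem vert_phi_phi (hxi : S.vert S.xi = S.xi) {U : VF} (hU : S.vert U = U) :
    S.vert (S.phi (S.phi U)) = S.phi (S.phi U) := by
  rw [S.phi_phi, S.vert_add, S.vert_neg, S.vert_smul, hU, hxi]

theorem horiz_phi_eq_phi_vert (hanti : S.AntiInvariant)
    (hphi : ∀ X, S.horiz X = X → S.vert (S.phi X) = S.phi X) (W : VF) :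
    S.horiz (S.phi W) = S.phi (S.vert W) := by
  conv_lhs => rw [← S.vert_add_horiz W, S.phi_add, S.horiz_add]
  rw [hanti _ (S.vert_vert W), S.horiz_eq_zero_of_vert (hphi _ (S.horiz_horiz W)), add_zero]

theorem horiz_nabla_phi (hxi : S.vert S.xi = S.xi) {Y : VF} (hY : S.eta Y = 0) (X : VF) :
    S.horiz (S.nabla X (S.phi Y)) = S.horiz (S.phi (S.nabla X Y)) := by
  have h := S.sasaki X Y
  rw [hY, zero_smul, sub_zero] at h
  have hH := congrArg S.horiz h
  rw [S.horiz_sub, S.horiz_smul, S.horiz_eq_zero_of_vert hxi, smul_zero] at hH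
  exact sub_eq_zero.mp hH

theorem A_phi_of_horiz (hxi : S.vert S.xi = S.xi)
    (hphi : ∀ X, S.horiz X = X → S.vert (S.phi X) = S.phi X)
    {X Y : VF} (hX : S.horiz X = X) (hY : S.horiz Y = Y) :
    S.A X (S.phi Y) = S.horiz (S.phi (S.nabla X Y)) := by
  have hφY := hphi Y hY
  rw [A, RiemannianSubmersionData.A, hX, hφY, S.horiz_eq_zero_of_vert hφY,
    S.nabla_zero_right, S.vert_zero, zero_add,
    S.horiz_nabla_phi hxi (S.eta_eq_zero_of_horiz hxi hY)]

theorem A_phi_sub_A_phi (hxi : S.vert S.xi = S.xi) (hanti : S.AntiInvariant)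
    (hphi : ∀ X, S.horiz X = X → S.vert (S.phi X) = S.phi X)
    {X Y : VF} (hX : S.horiz X = X) (hY : S.horiz Y = Y) :
    S.A X (S.phi Y) - S.A Y (S.phi X) = S.phi (S.vert (S.bracket X Y)) := by
  rw [S.A_phi_of_horiz hxi hphi hX hY, S.A_phi_of_horiz hxi hphi hY hX, ← S.horiz_sub,
    ← S.phi_sub, S.torsion_free, S.horiz_phi_eq_phi_vert hanti hphi]

theorem g_horiz_nabla_xi (hxi : S.vert S.xi = S.xi)
    (hphi : ∀ X, S.horiz X = X → S.vert (S.phi X) = S.phi X)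
    {X Y : VF} (hX : S.horiz X = X) (hY : S.horiz Y = Y) :
    S.g Y (S.nabla X S.xi) = 0 := by
  have h := S.g_phi Y (S.nabla X S.xi)
  rw [S.phi_nabla_xi, S.eta_eq_zero_of_horiz hxi hX, zero_smul, sub_zero,
    S.eta_eq_zero_of_horiz hxi hY, zero_mul, sub_zero,
    S.g_eq_zero_of_vert_of_horiz (hphi Y hY) hX] at h
  exact h.symm

theorem g_nabla_horiz_xi (hxi : S.vert S.xi = S.xi)
    (hphi : ∀ X, S.horiz X = X → S.vert (S.phi X) = S.phi X)
    {X Y : VF} (hX : S.horiz X = X) (hY : S.horiz Y = Y) :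
    S.g (S.nabla X Y) S.xi = 0 := by
  have h := S.compat X Y S.xi
  rw [← S.eta_g, S.eta_eq_zero_of_horiz hxi hY, S.der_zero,
    S.g_horiz_nabla_xi hxi hphi hX hY, add_zero] at h
  exact h.symm

theorem eta_bracket_of_horiz (hxi : S.vert S.xi = S.xi)
    (hphi : ∀ X, S.horiz X = X → S.vert (S.phi X) = S.phi X)
    {X Y : VF} (hX : S.horiz X = X) (hY : S.horiz Y = Y) :
    S.eta (S.bracket X Y) = 0 := by
  rw [S.eta_g, ← S.torsion_free, S.g_sub_left, S.g_nabla_horiz_xi hxi hphi hX hY,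
    S.g_nabla_horiz_xi hxi hphi hY hX, sub_zero]

theorem vert_eq_zero_of_phi_vert_eq_zero (hxi : S.vert S.xi = S.xi) {W : VF}
    (hW : S.eta W = 0) (hφ : S.phi (S.vert W) = 0) : S.vert W = 0 := by
  rw [S.eq_eta_smul_xi_of_phi_eq_zero hφ, S.eta_vert hxi, hW, zero_smul]

end SasakianSubmersionData

open SasakianSubmersionData in
/-- Corollary 1: for an anti-invariant Riemannian submersion from a Sasakian
manifold with `φ(ker F_*) = (ker F_*)^⊥`, the horizontal distribution
`(ker F_*)^⊥` is integrable iff `A_X φY = A_Y φX` for all horizontal `X, Y`. -/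
theorem horizontal_integrable_iff {Fn VF : Type} [CommRing Fn] [Algebra ℝ Fn]
    [AddCommGroup VF] [Module Fn VF]
    (S : SasakianSubmersionData Fn VF)
    (hxi : S.vert S.xi = S.xi)
    (hanti : S.AntiInvariant)
    (heq : ∀ X, S.horiz X = X → ∃ U, S.vert U = U ∧ S.phi U = X) :
    (∀ X Y, S.horiz X = X → S.horiz Y = Y → S.vert (S.bracket X Y) = 0) ↔
      (∀ X Y, S.horiz X = X → S.horiz Y = Y →
        S.A X (S.phi Y) = S.A Y (S.phi X)) := by
  have hphi : ∀ X, S.horiz X = X → S.vert (S.phi X) = S.phi X := fun X hX => by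
    obtain ⟨U, hU, rfl⟩ := heq X hX
    exact S.vert_phi_phi hxi hU
  constructor
  · intro hint X Y hX hY
    rw [← sub_eq_zero, S.A_phi_sub_A_phi hxi hanti hphi hX hY, hint X Y hX hY, S.phi_zero]
  · intro hA X Y hX hY
    have hdiff := S.A_phi_sub_A_phi hxi hanti hphi hX hY
    rw [hA X Y hX hY, sub_self] at hdiff
    exact S.vert_eq_zero_of_phi_vert_eq_zero hxi (S.eta_bracket_of_horiz hxi hphi hX hY)
      hdiff.symm
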